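/- arXiv:2209.05688 — 2 statements merged into one kernel-verified Lean document; each statement's English description precedes it below -/
import Mathlib

section
/- The translation efficiency function Λ(μ) = (Σ_{i=0}^m C(m,i)ℓ_i(μ/μ₀)^i)/(Σ_{i=0}^m C(m,i)β_i(μ/μ₀)^i) is strictly decreasing in μ on (0,∞) whenever ℓ_0 > ℓ_1 > ⋯ > ℓ_m ≥ 0 and 0 < β_0 < β_1 < ⋯ < β_m; in particular for m = 1, Λ(μ) = (ℓ_0 + ℓ_1 μ/μ₀)/(β_0 + β_1 μ/μ₀) is strictly decreasing when ℓ_0β_1 > ℓ_1β_0. -/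
open Finset Set

/-!
Write `P x = ∑ aᵢ xⁱ` and `Q x = ∑ bᵢ xⁱ` with `aᵢ = C(m,i) ℓᵢ`, `bᵢ = C(m,i) βᵢ` and `x = μ/μ₀`.
For `0 < x < y`, symmetrizing the double sum gives
`P x * Q y - P y * Q x = ∑_{i<j} (aᵢ bⱼ - aⱼ bᵢ) (xⁱ yʲ - yⁱ xʲ)`.
Both factors are positive for `i < j`: the second because `x < y`, the first because the ratio
`aᵢ / bᵢ = ℓᵢ / βᵢ` strictly decreases in `i`. As `Q > 0`, this is `P y / Q y < P x / Q x`.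
-/

theorem sum_sum_pos_of_add_swap {ι R : Type*} [AddCommMonoid R] [LinearOrder R]
    [IsOrderedCancelAddMonoid R] {s : Finset ι} {F : ι → ι → R}
    (h_nonneg : ∀ i ∈ s, ∀ j ∈ s, 0 ≤ F i j + F j i)
    (h_pos : ∃ i ∈ s, ∃ j ∈ s, 0 < F i j + F j i) :
    0 < ∑ i ∈ s, ∑ j ∈ s, F i j := by
  obtain ⟨i, hi, j, hj, hij⟩ := h_pos
  have h_sym : 0 < ∑ i ∈ s, ∑ j ∈ s, (F i j + F j i) :=
    sum_pos' (fun i hi => sum_nonneg (h_nonneg i hi))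
      ⟨i, hi, sum_pos' (h_nonneg i hi) ⟨j, hj, hij⟩⟩
  simp only [sum_add_distrib] at h_sym
  rw [sum_comm (f := fun i j => F j i)] at h_sym
  by_contra! h
  exact (add_nonpos h h).not_gt h_sym

section OrderedField

variable {K : Type*} [Field K] [LinearOrder K] [IsStrictOrderedRing K]

theorem pow_mul_pow_lt_pow_mul_pow {x y : K} (hx : 0 < x) (hxy : x < y) {i j : ℕ}
    (hij : i < j) : y ^ i * x ^ j < x ^ i * y ^ j := by
  obtain ⟨k, rfl⟩ := Nat.exists_eq_add_of_lt hij
  calc y ^ i * x ^ (i + k + 1) = (x ^ i * y ^ i) * x ^ (k + 1) := by ring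
    _ < (x ^ i * y ^ i) * y ^ (k + 1) :=
      mul_lt_mul_of_pos_left (pow_lt_pow_left₀ hxy hx.le (by omega))
        (by have := hx.trans hxy; positivity)
    _ = x ^ i * y ^ (i + k + 1) := by ring

theorem sum_mul_pow_mul_sum_mul_pow_lt {s : Finset ℕ} {a b : ℕ → K}
    (hab : ∀ i ∈ s, ∀ j ∈ s, i < j → a j * b i < a i * b j) (hs : s.Nontrivial)
    {x y : K} (hx : 0 < x) (hxy : x < y) :
    (∑ i ∈ s, a i * y ^ i) * (∑ j ∈ s, b j * x ^ j) <
      (∑ i ∈ s, a i * x ^ i) * (∑ j ∈ s, b j * y ^ j) := by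
  set F : ℕ → ℕ → K := fun i j => a i * b j * (x ^ i * y ^ j - y ^ i * x ^ j)
  have h_diff : (∑ i ∈ s, a i * x ^ i) * (∑ j ∈ s, b j * y ^ j) -
      (∑ i ∈ s, a i * y ^ i) * (∑ j ∈ s, b j * x ^ j) = ∑ i ∈ s, ∑ j ∈ s, F i j := by
    simp only [F, sum_mul_sum, ← sum_sub_distrib]
    exact sum_congr rfl fun i _ => sum_congr rfl fun j _ => by ring
  have h_swap (i j : ℕ) : F i j + F j i =
      (a i * b j - a j * b i) * (x ^ i * y ^ j - y ^ i * x ^ j) := by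
    simp only [F]; ring
  have h_lt : ∀ i ∈ s, ∀ j ∈ s, i < j → 0 < F i j + F j i := fun i hi j hj hij => by
    rw [h_swap]
    exact mul_pos (sub_pos.2 (hab i hi j hj hij))
      (sub_pos.2 (pow_mul_pow_lt_pow_mul_pow hx hxy hij))
  have h_nonneg : ∀ i ∈ s, ∀ j ∈ s, 0 ≤ F i j + F j i := fun i hi j hj => by
    rcases lt_trichotomy i j with hij | rfl | hji
    · exact (h_lt i hi j hj hij).le
    · simp [h_swap]
    · exact add_comm (F i j) _ ▸ (h_lt j hj i hi hji).le
  obtain ⟨i, hi, j, hj, hne⟩ := hs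
  have h_pos : ∃ i ∈ s, ∃ j ∈ s, 0 < F i j + F j i := by
    rcases hne.lt_or_gt with hij | hji
    · exact ⟨i, hi, j, hj, h_lt i hi j hj hij⟩
    · exact ⟨j, hj, i, hi, h_lt j hj i hi hji⟩
  exact sub_pos.1 (h_diff ▸ sum_sum_pos_of_add_swap h_nonneg h_pos)

theorem strictAntiOn_sum_mul_pow_div_sum_mul_pow {s : Finset ℕ} {a b : ℕ → K}
    (hb : ∀ i ∈ s, 0 < b i) (hab : ∀ i ∈ s, ∀ j ∈ s, i < j → a j * b i < a i * b j)
    (hs : s.Nontrivial) :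
    StrictAntiOn (fun x => (∑ i ∈ s, a i * x ^ i) / ∑ i ∈ s, b i * x ^ i) (Ioi 0) := by
  intro x hx y hy hxy
  have h_den_pos (z : K) (hz : 0 < z) : 0 < ∑ i ∈ s, b i * z ^ i :=
    sum_pos (fun i hi => mul_pos (hb i hi) (pow_pos hz i)) hs.nonempty
  exact (div_lt_div_iff₀ (h_den_pos y hy) (h_den_pos x hx)).2
    (sum_mul_pow_mul_sum_mul_pow_lt hab hs hx hxy)

theorem strictAntiOn_weighted_sum_div_weighted_sum {m : ℕ} (hm : 1 ≤ m) {w ℓ β : ℕ → K}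
    (hw : ∀ i ≤ m, 0 < w i) (hℓ : StrictAntiOn ℓ (Set.Iic m)) (hℓm : 0 ≤ ℓ m)
    (hβ : StrictMonoOn β (Set.Iic m)) (hβ0 : 0 < β 0) :
    StrictAntiOn (fun x => (∑ i ∈ range (m + 1), w i * ℓ i * x ^ i) /
      ∑ i ∈ range (m + 1), w i * β i * x ^ i) (Ioi 0) := by
  have hβ_pos {i : ℕ} (hi : i ≤ m) : 0 < β i :=
    hβ0.trans_le (hβ.monotoneOn (Nat.zero_le m) hi (Nat.zero_le i))
  have hb : ∀ i ∈ range (m + 1), 0 < w i * β i := fun i hi => by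
    have hi : i ≤ m := Nat.lt_succ_iff.1 (Finset.mem_range.1 hi)
    exact mul_pos (hw i hi) (hβ_pos hi)
  have hab : ∀ i ∈ range (m + 1), ∀ j ∈ range (m + 1), i < j →
      w j * ℓ j * (w i * β i) < w i * ℓ i * (w j * β j) := fun i _ j hj hij => by
    have hj : j ≤ m := Nat.lt_succ_iff.1 (Finset.mem_range.1 hj)
    have hi : i ≤ m := hij.le.trans hj
    have hℓj : 0 ≤ ℓ j := hℓm.trans (hℓ.antitoneOn hj (le_refl m) hj)
    have h_ratio : ℓ j * β i < ℓ i * β j :=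
      mul_lt_mul'' (hℓ hi hj hij) (hβ hi hj hij) hℓj (hβ_pos hi).le
    calc _ = (w i * w j) * (ℓ j * β i) := by ring
      _ < (w i * w j) * (ℓ i * β j) := mul_lt_mul_of_pos_left h_ratio (mul_pos (hw i hi) (hw j hj))
      _ = _ := by ring
  have hs : (range (m + 1)).Nontrivial :=
    ⟨0, Finset.mem_range.2 (by omega), 1, Finset.mem_range.2 (by omega), zero_ne_one⟩
  exact strictAntiOn_sum_mul_pow_div_sum_mul_pow hb hab hs

theorem strictAntiOn_linear_div_linear {l₀ l₁ b₀ b₁ : K} (hb₀ : 0 < b₀) (hb₁ : 0 < b₁)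
    (h : l₁ * b₀ < l₀ * b₁) : StrictAntiOn (fun x => (l₀ + l₁ * x) / (b₀ + b₁ * x)) (Ioi 0) := by
  have h_sum := strictAntiOn_sum_mul_pow_div_sum_mul_pow (s := range 2)
    (a := fun i => if i = 0 then l₀ else l₁) (b := fun i => if i = 0 then b₀ else b₁)
    (by intro i _; split_ifs <;> assumption)
    (by
      intro i _ j hj hij
      obtain rfl : j = 1 := by simp only [Finset.mem_range] at hj; omega
      obtain rfl : i = 0 := by omega
      simpa using h)
    ⟨0, by simp, 1, by simp, zero_ne_one⟩
  simpa [sum_range_succ] using h_sum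

theorem StrictAntiOn.comp_div_const_Ioi {f : K → K} (hf : StrictAntiOn f (Ioi 0)) {c : K}
    (hc : 0 < c) : StrictAntiOn (fun μ => f (μ / c)) (Ioi 0) :=
  hf.comp_strictMonoOn (fun _ _ _ _ h => div_lt_div_of_pos_right h hc)
    (fun _ hμ => div_pos hμ hc)

end OrderedField

/-- The translation efficiency function Λ is strictly decreasing on (0,∞) when the
translation rates are strictly decreasing and the degradation rates strictly increasing;
in particular for m = 1. -/
theorem translation_efficiency_strictAnti
    (m : ℕ) (hm : 1 ≤ m) (μ₀ : ℝ) (hμ₀ : 0 < μ₀)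
    (ell beta : ℕ → ℝ)
    (hell_dec : ∀ i < m, ell (i + 1) < ell i) (hell_last : 0 ≤ ell m)
    (hbeta0 : 0 < beta 0) (hbeta_inc : ∀ i < m, beta i < beta (i + 1))
    (Lam : ℝ → ℝ)
    (hLam : ∀ μ, Lam μ =
      (∑ i ∈ Finset.range (m + 1), (m.choose i : ℝ) * ell i * (μ / μ₀) ^ i) /
      (∑ i ∈ Finset.range (m + 1), (m.choose i : ℝ) * beta i * (μ / μ₀) ^ i)) :
    StrictAntiOn Lam (Set.Ioi 0) ∧
    (∀ l0 l1 b0 b1 : ℝ, 0 < b0 → 0 < b1 → l0 * b1 > l1 * b0 →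
      StrictAntiOn (fun μ : ℝ => (l0 + l1 * (μ / μ₀)) / (b0 + b1 * (μ / μ₀)))
        (Set.Ioi 0)) := by
  refine ⟨?_, fun l0 l1 b0 b1 hb0 hb1 h =>
    (strictAntiOn_linear_div_linear hb0 hb1 h).comp_div_const_Ioi hμ₀⟩
  rw [show Lam = _ from funext hLam]
  exact (strictAntiOn_weighted_sum_div_weighted_sum hm (w := fun i => (m.choose i : ℝ))
    (fun i hi => Nat.cast_pos.2 (Nat.choose_pos hi)) (strictAntiOn_Iic_of_succ_lt hell_dec)
    hell_last (strictMonoOn_Iic_of_lt_succ hbeta_inc) hbeta0).comp_div_const_Ioi hμ₀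
end

section
/- (Monotone effect of gradual knockout) Let T(P_tot) and P(P_tot) solve the coupled system F_T(T,P) = T_tot, F_P(T,P) = P_tot where F_T(T,P) = T(1 + Σ_i G_i a_{iT}/D_i) and F_P(T,P) = P(1 + Σ_i G_i a_{iP}/D_i), D_i = 1 + c_{iT}T + c_{iP}P, i ∈ {0,1}. Then the map (T,P) ↦ (F_T, F_P) is injective on (0,∞)²; consequently for each (T_tot, P_tot) there is at most one positive steady state. -/
/-- Injectivity of the two-EF, two-gene conservation map (F_T, F_P) on the positive
orthant: at most one positive steady state for each total level pair. -/
theorem two_EF_map_injective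
    (G0 G1 a0T a1T a0P a1P c0T c1T c0P c1P : ℝ)
    (hG0 : 0 < G0) (hG1 : 0 < G1)
    (ha0T : 0 < a0T) (ha1T : 0 < a1T) (ha0P : 0 < a0P) (ha1P : 0 < a1P)
    (hc0T : 0 < c0T) (hc1T : 0 < c1T) (hc0P : 0 < c0P) (hc1P : 0 < c1P)
    (FT FP : ℝ → ℝ → ℝ)
    (hFT : ∀ T P, FT T P = T * (1 + G0 * a0T / (1 + c0T * T + c0P * P)
                                  + G1 * a1T / (1 + c1T * T + c1P * P)))
    (hFP : ∀ T P, FP T P = P * (1 + G0 * a0P / (1 + c0T * T + c0P * P)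
                                  + G1 * a1P / (1 + c1T * T + c1P * P))) :
    ∀ T₁ P₁ T₂ P₂ : ℝ, 0 < T₁ → 0 < P₁ → 0 < T₂ → 0 < P₂ →
      FT T₁ P₁ = FT T₂ P₂ → FP T₁ P₁ = FP T₂ P₂ → T₁ = T₂ ∧ P₁ = P₂ := by
  intro T₁ P₁ T₂ P₂ hT₁ hP₁ hT₂ hP₂ hTe hPe
  rw [hFT, hFT] at hTe
  rw [hFP, hFP] at hPe
  have hd01 : (0:ℝ) < 1 + c0T * T₁ + c0P * P₁ := by positivity
  have hd02 : (0:ℝ) < 1 + c0T * T₂ + c0P * P₂ := by positivity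
  have hd11 : (0:ℝ) < 1 + c1T * T₁ + c1P * P₁ := by positivity
  have hd12 : (0:ℝ) < 1 + c1T * T₂ + c1P * P₂ := by positivity
  have hn01 := hd01.ne'
  have hn02 := hd02.ne'
  have hn11 := hd11.ne'
  have hn12 := hd12.ne'
  -- abbreviations for the four "Jacobian-like" combinations
  set E0 : ℝ := (1 + c0T * T₁ + c0P * P₁) * (1 + c0T * T₂ + c0P * P₂) with hE0
  set E1 : ℝ := (1 + c1T * T₁ + c1P * P₁) * (1 + c1T * T₂ + c1P * P₂) with hE1
  have hE0pos : 0 < E0 := mul_pos hd01 hd02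
  have hE1pos : 0 < E1 := mul_pos hd11 hd12
  have hα : 0 < 1 + G0 * a0T / E0 + G1 * a1T / E1 := by positivity
  have hβ : 0 < G0 * a0T * c0P / E0 + G1 * a1T * c1P / E1 := by positivity
  have hγ : 0 < 1 + G0 * a0P / E0 + G1 * a1P / E1 := by positivity
  have hδ : 0 < G0 * a0P * c0T / E0 + G1 * a1P * c1T / E1 := by positivity
  -- equation (A) from FT equality
  have hA : (T₂ - T₁) * (1 + G0 * a0T / E0 + G1 * a1T / E1)
      + (T₂ * P₁ - T₁ * P₂) * (G0 * a0T * c0P / E0 + G1 * a1T * c1P / E1) = 0 := by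
    rw [hE0, hE1]
    field_simp at hTe ⊢
    linear_combination -hTe
  -- equation (B) from FP equality
  have hB : (P₂ - P₁) * (1 + G0 * a0P / E0 + G1 * a1P / E1)
      - (T₂ * P₁ - T₁ * P₂) * (G0 * a0P * c0T / E0 + G1 * a1P * c1T / E1) = 0 := by
    rw [hE0, hE1]
    field_simp at hPe ⊢
    linear_combination -hPe
  -- combine: K times a positive quantity is zero
  have key : (T₂ * P₁ - T₁ * P₂) *
      ((1 + G0 * a0T / E0 + G1 * a1T / E1) * (1 + G0 * a0P / E0 + G1 * a1P / E1)
        + P₁ * (G0 * a0T * c0P / E0 + G1 * a1T * c1P / E1) * (1 + G0 * a0P / E0 + G1 * a1P / E1)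
        + T₁ * (G0 * a0P * c0T / E0 + G1 * a1P * c1T / E1) * (1 + G0 * a0T / E0 + G1 * a1T / E1)) = 0 := by
    linear_combination (P₁ * (1 + G0 * a0P / E0 + G1 * a1P / E1)) * hA
      - (T₁ * (1 + G0 * a0T / E0 + G1 * a1T / E1)) * hB
  have hposfac : 0 < (1 + G0 * a0T / E0 + G1 * a1T / E1) * (1 + G0 * a0P / E0 + G1 * a1P / E1)
        + P₁ * (G0 * a0T * c0P / E0 + G1 * a1T * c1P / E1) * (1 + G0 * a0P / E0 + G1 * a1P / E1)
        + T₁ * (G0 * a0P * c0T / E0 + G1 * a1P * c1T / E1) * (1 + G0 * a0T / E0 + G1 * a1T / E1) := by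
    positivity
  have hK : T₂ * P₁ - T₁ * P₂ = 0 := by
    rcases mul_eq_zero.mp key with h | h
    · exact h
    · exact absurd h hposfac.ne'
  have hTeq : T₁ = T₂ := by
    have h1 : (T₂ - T₁) * (1 + G0 * a0T / E0 + G1 * a1T / E1) = 0 := by
      linear_combination hA - (G0 * a0T * c0P / E0 + G1 * a1T * c1P / E1) * hK
    rcases mul_eq_zero.mp h1 with h | h
    · linarith
    · exact absurd h hα.ne'
  have hPeq : P₁ = P₂ := by
    have h1 : (P₂ - P₁) * (1 + G0 * a0P / E0 + G1 * a1P / E1) = 0 := by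
      linear_combination hB + (G0 * a0P * c0T / E0 + G1 * a1P * c1T / E1) * hK
    rcases mul_eq_zero.mp h1 with h | h
    · linarith
    · exact absurd h hγ.ne'
  exact ⟨hTeq, hPeq⟩
end
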